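/- For the football parameters (u,v,w) = (5,3,5), the Coxeter–Schläfli matrix M(5,3,5) is invertible and all four diagonal entries of its inverse are negative. (Geometrically: all four vertices A₀, A₁, A₂, A₃ of the football orthoscheme are proper points of hyperbolic space, so no truncation is needed.) -/

import Mathlib

open Real Matrix

/-!
The Coxeter diagram of `M(u,v,w)` is a path, so `M` is tridiagonal and its determinant and
principal cofactors are short polynomials in the cosines. With `cos (π/5) ^ 2 = (3 + √5)/8` and
`cos (π/3) = 1/2` the determinant of `M(5,3,5)` is `(7 - 5√5)/32 < 0`, whereas each diagonal
cofactor is the determinant of a spherical subdiagram and hence positive. Since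
`N_ii = adj(M)_ii / det M`, every `N_ii` is negative.
-/

/-- The Coxeter–Schläfli matrix `M(u,v,w)`. -/
noncomputable def coxeterSchlafli (u v w : ℕ) : Matrix (Fin 4) (Fin 4) ℝ :=
  !![1, -Real.cos (π / u), 0, 0;
     -Real.cos (π / u), 1, -Real.cos (π / v), 0;
     0, -Real.cos (π / v), 1, -Real.cos (π / w);
     0, 0, -Real.cos (π / w), 1]

theorem det_coxeterSchlafli (u v w : ℕ) :
    (coxeterSchlafli u v w).det =
      1 - cos (π / u) ^ 2 - cos (π / v) ^ 2 - cos (π / w) ^ 2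
        + cos (π / u) ^ 2 * cos (π / w) ^ 2 := by
  simp [coxeterSchlafli, det_succ_row_zero, Fin.sum_univ_succ, Fin.succAbove]
  ring

theorem adjugate_coxeterSchlafli_apply_self (u v w : ℕ) (i : Fin 4) :
    (coxeterSchlafli u v w).adjugate i i =
      ![1 - cos (π / v) ^ 2 - cos (π / w) ^ 2, 1 - cos (π / w) ^ 2,
        1 - cos (π / u) ^ 2, 1 - cos (π / u) ^ 2 - cos (π / v) ^ 2] i := by
  fin_cases i <;>
    simp [adjugate_fin_succ_eq_det_submatrix, det_fin_three, coxeterSchlafli, Fin.succAbove] <;> ring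

theorem Matrix.inv_apply_eq_adjugate_div_det {n K : Type*} [Fintype n] [DecidableEq n] [Field K]
    (A : Matrix n n K) (i j : n) : A⁻¹ i j = A.adjugate i j / A.det := by
  rw [inv_def, Matrix.smul_apply, Ring.inverse_eq_inv', smul_eq_mul, div_eq_inv_mul]

theorem cos_pi_div_five_sq : cos (π / 5) ^ 2 = (3 + √5) / 8 := by
  rw [cos_pi_div_five]
  ring_nf
  rw [sq_sqrt (by norm_num)]
  ring

theorem det_football : (coxeterSchlafli 5 3 5).det = (7 - 5 * √5) / 32 := by
  have h5 : √5 ^ 2 = 5 := sq_sqrt (by norm_num)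
  rw [det_coxeterSchlafli]
  push_cast
  rw [cos_pi_div_five_sq, cos_pi_div_three]
  linear_combination h5 / 64

theorem det_football_neg : (coxeterSchlafli 5 3 5).det < 0 := by
  have : (7 / 5 : ℝ) < √5 := by
    rw [lt_sqrt (by norm_num)]; norm_num
  rw [det_football]
  linarith

theorem adjugate_football_apply_self_pos (i : Fin 4) : 0 < (coxeterSchlafli 5 3 5).adjugate i i := by
  have : √5 < 3 := by
    rw [sqrt_lt' (by norm_num)]; norm_num
  rw [adjugate_coxeterSchlafli_apply_self]
  push_cast
  rw [cos_pi_div_five_sq, cos_pi_div_three]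
  fin_cases i <;>
    simp only [Fin.zero_eta, Fin.mk_one, Fin.reduceFinMk, Fin.isValue, cons_val_zero,
      cons_val_one, cons_val] <;>
    linarith

theorem football_inv_diag_neg :
    IsUnit (coxeterSchlafli 5 3 5).det ∧
    ∀ i : Fin 4, (coxeterSchlafli 5 3 5)⁻¹ i i < 0 := by
  refine ⟨det_football_neg.ne.isUnit, fun i => ?_⟩
  rw [Matrix.inv_apply_eq_adjugate_div_det]
  exact div_neg_of_pos_of_neg (adjugate_football_apply_self_pos i) det_football_neg
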